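/- Let C be an additive category carrying a symmetric monoidal structure whose tensor product is bi-additive, and let O be a ⊗-invertible object. Let C_ℤ denote the category whose objects are pairs (X, m) with X an object of C and m ∈ ℤ, whose morphisms are Hom_{C_ℤ}((X,m),(Y,n)) = Hom_C(X, Y ⊗ O^{⊗(n−m)}), and whose composition sends f : X → Y ⊗ O^{⊗(n−m)} and g : Y → Z ⊗ O^{⊗(p−n)} to (g ⊗ id_{O^{⊗(n−m)}}) ∘ f composed with the canonical isomorphism Z ⊗ O^{⊗(p−n)} ⊗ O^{⊗(n−m)} ≅ Z ⊗ O^{⊗(p−m)}. Let T : C_ℤ → C_ℤ be the automorphism sending (X, m) to (X, m+1) and acting by the canonical identifications on morphisms. Then the functor from the orbit category C/_{-⊗O} to the orbit category C_ℤ/T which sends an object X to (X, 0) and acts by the canonical identifications ⊕_{j∈ℤ} Hom_C(X, Y⊗O^{⊗j}) ≅ ⊕_{j∈ℤ} Hom_{C_ℤ}((X,0), T^j(Y,0)) on morphisms is an equivalence of categories (it is fully faithful, and essentially surjective because (X, m) is isomorphic to (X, 0) in C_ℤ/T for every m). -/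

import Mathlib

/-!
Statement 6: Let `C` be an additive symmetric monoidal category with bi-additive
tensor product and `O` a ⊗-invertible object (with chosen powers `O^{⊗j}`).  Let
`C_ℤ` be the category with objects pairs `(X, m)`, `X ∈ C`, `m ∈ ℤ`, morphisms
`Hom((X,m),(Y,n)) = Hom_C(X, Y ⊗ O^{⊗(n−m)})`, and the evident composition; let
`T : C_ℤ → C_ℤ` be the automorphism `(X, m) ↦ (X, m+1)`.  Then the canonical functor
from the orbit category `C/_{-⊗O}` to the orbit category `C_ℤ/T`, sending `X` to
`(X, 0)` and acting by the canonical identifications on morphisms, is an equivalence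
of categories: it is fully faithful, and essentially surjective because `(X, m)` is
isomorphic to `(X, 0)` in `C_ℤ/T` for every `m`.
-/

open CategoryTheory CategoryTheory.Limits MonoidalCategory DirectSum

universe v u

namespace OrbitComparisonFormalization

variable (C : Type u) [Category.{v} C] [Preadditive C] [MonoidalCategory C]
  [SymmetricCategory C] [MonoidalPreadditive C]

/-- A witness that `O` is a ⊗-invertible object: a chosen system of tensor powers
`P j = O^{⊗j}` (`j ∈ ℤ`), with `P 1 = O`, `P 0 = 𝟙_C`, a chosen ⊗-inverse `P (-1)`,
and the canonical multiplication isomorphisms `O^{⊗i} ⊗ O^{⊗j} ≅ O^{⊗(i+j)}`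
(in particular `O ⊗ P (-1) ≅ P 0 ≅ 𝟙_C`, so `O` is ⊗-invertible), satisfying the
canonical associativity and unit coherences. -/
structure PowerSystem (O : C) where
  /-- the chosen tensor powers `O^{⊗j}` -/
  P : ℤ → C
  /-- `O^{⊗0}` is the tensor unit -/
  u0 : P 0 ≅ 𝟙_ C
  /-- `O^{⊗1}` is `O` -/
  u1 : P 1 ≅ O
  /-- the canonical isomorphisms `O^{⊗i} ⊗ O^{⊗j} ≅ O^{⊗(i+j)}` -/
  μ : ∀ i j : ℤ, P i ⊗ P j ≅ P (i + j)
  /-- associativity coherence of the multiplication isomorphisms -/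
  μ_assoc : ∀ i j k : ℤ,
    (μ i j).hom ▷ P k ≫ (μ (i + j) k).hom =
      (α_ (P i) (P j) (P k)).hom ≫ P i ◁ (μ j k).hom ≫ (μ i (j + k)).hom ≫
        eqToHom (congrArg P (add_assoc i j k).symm)
  /-- left unit coherence -/
  μ_zero_add : ∀ j : ℤ, (μ 0 j).hom =
    u0.hom ▷ P j ≫ (λ_ (P j)).hom ≫ eqToHom (congrArg P (zero_add j).symm)
  /-- right unit coherence -/
  μ_add_zero : ∀ i : ℤ, (μ i 0).hom =
    P i ◁ u0.hom ≫ (ρ_ (P i)).hom ≫ eqToHom (congrArg P (add_zero i).symm)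

/-- Objects of the orbit category `C/_{-⊗O}`: the same as the objects of `C`. -/
structure TOrbit (O : C) (S : PowerSystem C O) where
  /-- the underlying object of `C` -/
  un : C

variable (O : C) (S : PowerSystem C O)

/-- Morphisms of the orbit category: `⊕_{j∈ℤ} Hom_C(X, Y ⊗ O^{⊗j})`. -/
abbrev THom (X Y : C) : Type _ :=
  DirectSum ℤ (fun j => X ⟶ Y ⊗ S.P j)

/-- The degree-zero inclusion `Hom_C(X, Y) → Hom_C(X, Y ⊗ O^{⊗0})`. -/
def te₀ {X Y : C} (f : X ⟶ Y) : X ⟶ Y ⊗ S.P 0 :=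
  f ≫ (ρ_ Y).inv ≫ (Y ◁ S.u0.inv)

/-- Composition of homogeneous components of the orbit category: the composite of
`f : X ⟶ Y ⊗ O^{⊗r}` (degree `r`) and `g : Y ⟶ Z ⊗ O^{⊗s}` (degree `s`) is
`(F^r g) ∘ f`, of degree `r + s`, as a bilinear map. -/
def thcompHom (X Y Z : C) (r s : ℤ) :
    (X ⟶ Y ⊗ S.P r) →+ ((Y ⟶ Z ⊗ S.P s) →+ THom C O S X Z) :=
  AddMonoidHom.mk'
    (fun f => AddMonoidHom.mk'
      (fun g => DirectSum.of (fun j => X ⟶ Z ⊗ S.P j) (s + r)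
        (f ≫ g ▷ S.P r ≫ (α_ Z (S.P s) (S.P r)).hom ≫ Z ◁ (S.μ s r).hom))
      (fun g g' => by
        rw [← map_add]
        simp [MonoidalPreadditive.add_whiskerRight, Preadditive.add_comp,
          Preadditive.comp_add]))
    (fun f f' => by
      ext g
      simp only [AddMonoidHom.mk'_apply, AddMonoidHom.add_apply, ← map_add]
      congr 1
      simp [Preadditive.add_comp])

/-- Composition in the orbit category, as the unique bilinear extension of the
composition of homogeneous components. -/
def tocomp {X Y Z : C} : THom C O S X Y →+ (THom C O S Y Z →+ THom C O S X Z) :=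
  DirectSum.toAddMonoid fun r =>
    (DirectSum.toAddMonoid fun s => (thcompHom C O S X Y Z r s).flip).flip

/-- The `CategoryStruct` of the orbit category `C/_{-⊗O}`. -/
instance torbitStruct : CategoryStruct (TOrbit C O S) where
  Hom X Y := THom C O S X.un Y.un
  id X := DirectSum.of _ 0 (te₀ C O S (𝟙 X.un))
  comp f g := tocomp C O S f g

instance (X Y : TOrbit C O S) : AddCommGroup (X ⟶ Y) :=
  inferInstanceAs (AddCommGroup (THom C O S X.un Y.un))


/-- An object of `C`, seen as an object of the orbit category. -/
def tmk (X : C) : TOrbit C O S := ⟨X⟩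

/-- The orbit category `C/_{-⊗O}`, given proofs of the category axioms. -/
def torbitCategory
    (h₁ : ∀ {X Y : TOrbit C O S} (f : X ⟶ Y), 𝟙 X ≫ f = f)
    (h₂ : ∀ {X Y : TOrbit C O S} (f : X ⟶ Y), f ≫ 𝟙 Y = f)
    (h₃ : ∀ {W X Y Z : TOrbit C O S} (f : W ⟶ X) (g : X ⟶ Y) (h : Y ⟶ Z),
      (f ≫ g) ≫ h = f ≫ g ≫ h) :
    Category (TOrbit C O S) :=
  { id_comp := h₁, comp_id := h₂, assoc := h₃ }

/-- Objects of the category `C_ℤ`: pairs `(X, m)` with `X ∈ C` and `m ∈ ℤ`. -/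
structure CZ (O : C) (S : PowerSystem C O) where
  /-- the underlying object of `C` -/
  base : C
  /-- the integer label -/
  deg : ℤ

variable {C O S} in
/-- Composition in `C_ℤ`: `f : X ⟶ Y ⊗ O^{⊗(n−m)}` and `g : Y ⟶ Z ⊗ O^{⊗(p−n)}`
compose to `(g ⊗ id) ∘ f` composed with the canonical isomorphism
`Z ⊗ O^{⊗(p−n)} ⊗ O^{⊗(n−m)} ≅ Z ⊗ O^{⊗(p−m)}`. -/
def czComp {A B D : CZ C O S} (f : A.base ⟶ B.base ⊗ S.P (B.deg - A.deg))
    (g : B.base ⟶ D.base ⊗ S.P (D.deg - B.deg)) :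
    A.base ⟶ D.base ⊗ S.P (D.deg - A.deg) :=
  f ≫ g ▷ S.P (B.deg - A.deg) ≫
    (α_ D.base (S.P (D.deg - B.deg)) (S.P (B.deg - A.deg))).hom ≫
      D.base ◁ (S.μ (D.deg - B.deg) (B.deg - A.deg)).hom ≫
        D.base ◁ eqToHom (congrArg S.P (by omega :
          D.deg - B.deg + (B.deg - A.deg) = D.deg - A.deg))

/-- The `CategoryStruct` of `C_ℤ`. -/
instance czStruct : CategoryStruct (CZ C O S) where
  Hom A B := A.base ⟶ B.base ⊗ S.P (B.deg - A.deg)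
  id A := te₀ C O S (𝟙 A.base) ≫
    A.base ◁ eqToHom (congrArg S.P (by omega : (0 : ℤ) = A.deg - A.deg))
  comp f g := czComp f g

/-- The category `C_ℤ`, given proofs of the category axioms. -/
def czCategory
    (k₁ : ∀ {A B : CZ C O S} (f : A ⟶ B), 𝟙 A ≫ f = f)
    (k₂ : ∀ {A B : CZ C O S} (f : A ⟶ B), f ≫ 𝟙 B = f)
    (k₃ : ∀ {A B D E : CZ C O S} (f : A ⟶ B) (g : B ⟶ D) (h : D ⟶ E),
      (f ≫ g) ≫ h = f ≫ g ≫ h) :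
    Category (CZ C O S) :=
  { id_comp := k₁, comp_id := k₂, assoc := k₃ }

/-- The action on morphisms of the automorphism `T : C_ℤ → C_ℤ`,
`(X, m) ↦ (X, m+1)`: the canonical identification
`Hom_C(X, Y ⊗ O^{⊗(n−m)}) ≅ Hom_C(X, Y ⊗ O^{⊗((n+1)−(m+1))})`. -/
def czTmap {A B : CZ C O S} (f : A ⟶ B) :
    (⟨A.base, A.deg + 1⟩ : CZ C O S) ⟶ ⟨B.base, B.deg + 1⟩ :=
  show A.base ⟶ B.base ⊗ S.P (B.deg + 1 - (A.deg + 1)) from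
    (show A.base ⟶ B.base ⊗ S.P (B.deg - A.deg) from f) ≫
      B.base ◁ eqToHom (congrArg S.P (by omega :
        B.deg - A.deg = B.deg + 1 - (A.deg + 1)))

/-- The automorphism `T : C_ℤ → C_ℤ`, `(X, m) ↦ (X, m+1)`, acting by the canonical
identifications on morphisms. -/
def czT
    (k₁ : ∀ {A B : CZ C O S} (f : A ⟶ B), 𝟙 A ≫ f = f)
    (k₂ : ∀ {A B : CZ C O S} (f : A ⟶ B), f ≫ 𝟙 B = f)
    (k₃ : ∀ {A B D E : CZ C O S} (f : A ⟶ B) (g : B ⟶ D) (h : D ⟶ E),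
      (f ≫ g) ≫ h = f ≫ g ≫ h)
    (t₁ : ∀ A : CZ C O S, czTmap C O S (𝟙 A) = 𝟙 (⟨A.base, A.deg + 1⟩ : CZ C O S))
    (t₂ : ∀ {A B D : CZ C O S} (f : A ⟶ B) (g : B ⟶ D),
      czTmap C O S (f ≫ g) = czTmap C O S f ≫ czTmap C O S g) :
    @CategoryTheory.Functor (CZ C O S) (czCategory C O S @k₁ @k₂ @k₃)
      (CZ C O S) (czCategory C O S @k₁ @k₂ @k₃) :=
  @CategoryTheory.Functor.mk (CZ C O S) (czCategory C O S @k₁ @k₂ @k₃)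
    (CZ C O S) (czCategory C O S @k₁ @k₂ @k₃)
    (fun A => ⟨A.base, A.deg + 1⟩) (fun f => czTmap C O S f)
    (fun A => t₁ A) (fun f g => t₂ f g)

/-- Objects of the orbit category `C_ℤ/T`: the same as the objects of `C_ℤ`. -/
structure ZOrbit (O : C) (S : PowerSystem C O) where
  /-- the underlying object of `C` -/
  base : C
  /-- the integer label -/
  deg : ℤ

/-- Morphisms of the orbit category `C_ℤ/T`:
`⊕_{j∈ℤ} Hom_{C_ℤ}((X,m), T^j (Y,n)) = ⊕_{j∈ℤ} Hom_C(X, Y ⊗ O^{⊗(n+j−m)})`. -/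
abbrev ZOHom (A B : ZOrbit C O S) : Type _ :=
  DirectSum ℤ (fun j => A.base ⟶ B.base ⊗ S.P (B.deg + j - A.deg))

variable {C O S} in
/-- Homogeneous composition in `C_ℤ/T` (induced by the composition of `C_ℤ` and the
identifications `T^j (Y,n) = (Y, n+j)`), as a bilinear map. -/
def zoCompHom (A B D : ZOrbit C O S) (r s : ℤ) :
    (A.base ⟶ B.base ⊗ S.P (B.deg + r - A.deg)) →+
      ((B.base ⟶ D.base ⊗ S.P (D.deg + s - B.deg)) →+ ZOHom C O S A D) :=
  AddMonoidHom.mk'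
    (fun f => AddMonoidHom.mk'
      (fun g => DirectSum.of (fun j => A.base ⟶ D.base ⊗ S.P (D.deg + j - A.deg)) (r + s)
        (f ≫ g ▷ S.P (B.deg + r - A.deg) ≫
          (α_ D.base (S.P (D.deg + s - B.deg)) (S.P (B.deg + r - A.deg))).hom ≫
            D.base ◁ (S.μ (D.deg + s - B.deg) (B.deg + r - A.deg)).hom ≫
              D.base ◁ eqToHom (congrArg S.P (by omega :
                D.deg + s - B.deg + (B.deg + r - A.deg) = D.deg + (r + s) - A.deg))))
      (fun g g' => by
        rw [← map_add]
        simp [MonoidalPreadditive.add_whiskerRight, Preadditive.add_comp,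
          Preadditive.comp_add]))
    (fun f f' => by
      ext g
      simp only [AddMonoidHom.mk'_apply, AddMonoidHom.add_apply, ← map_add]
      congr 1
      simp [Preadditive.add_comp])

variable {C O S} in
/-- Composition in the orbit category `C_ℤ/T`. -/
def zoComp {A B D : ZOrbit C O S} : ZOHom C O S A B →+ (ZOHom C O S B D →+ ZOHom C O S A D) :=
  DirectSum.toAddMonoid fun r =>
    (DirectSum.toAddMonoid fun s => (zoCompHom A B D r s).flip).flip

/-- The `CategoryStruct` of the orbit category `C_ℤ/T`. -/
instance zoStruct : CategoryStruct (ZOrbit C O S) where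
  Hom A B := ZOHom C O S A B
  id A := DirectSum.of _ 0 (te₀ C O S (𝟙 A.base) ≫
    A.base ◁ eqToHom (congrArg S.P (by omega : (0 : ℤ) = A.deg + 0 - A.deg)))
  comp f g := zoComp f g

/-- The orbit category `C_ℤ/T`, given proofs of the category axioms. -/
def zoCategory
    (l₁ : ∀ {A B : ZOrbit C O S} (f : A ⟶ B), 𝟙 A ≫ f = f)
    (l₂ : ∀ {A B : ZOrbit C O S} (f : A ⟶ B), f ≫ 𝟙 B = f)
    (l₃ : ∀ {A B D E : ZOrbit C O S} (f : A ⟶ B) (g : B ⟶ D) (h : D ⟶ E),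
      (f ≫ g) ≫ h = f ≫ g ≫ h) :
    Category (ZOrbit C O S) :=
  { id_comp := l₁, comp_id := l₂, assoc := l₃ }

variable {C O S} in
/-- The action on morphisms of the comparison functor `C/_{-⊗O} → C_ℤ/T`: the
canonical identification
`⊕_j Hom_C(X, Y ⊗ O^{⊗j}) ≅ ⊕_j Hom_{C_ℤ}((X,0), T^j (Y,0))`. -/
def compareMap {X Y : TOrbit C O S} (φ : X ⟶ Y) :
    ZOHom C O S ⟨X.un, 0⟩ ⟨Y.un, 0⟩ :=
  DirectSum.toAddMonoid
    (fun j => AddMonoidHom.mk'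
      (fun f : X.un ⟶ Y.un ⊗ S.P j =>
        DirectSum.of (fun i => X.un ⟶ Y.un ⊗ S.P (0 + i - 0)) j
          (f ≫ Y.un ◁ eqToHom (congrArg S.P (by omega : j = 0 + j - 0))))
      (fun f f' => by
        rw [← map_add]
        simp [Preadditive.add_comp])) φ

/-- The body of Statement 6. -/
def Statement6Body
    (h₁ : ∀ {X Y : TOrbit C O S} (f : X ⟶ Y), 𝟙 X ≫ f = f)
    (h₂ : ∀ {X Y : TOrbit C O S} (f : X ⟶ Y), f ≫ 𝟙 Y = f)
    (h₃ : ∀ {W X Y Z : TOrbit C O S} (f : W ⟶ X) (g : X ⟶ Y) (h : Y ⟶ Z),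
      (f ≫ g) ≫ h = f ≫ g ≫ h)
    (l₁ : ∀ {A B : ZOrbit C O S} (f : A ⟶ B), 𝟙 A ≫ f = f)
    (l₂ : ∀ {A B : ZOrbit C O S} (f : A ⟶ B), f ≫ 𝟙 B = f)
    (l₃ : ∀ {A B D E : ZOrbit C O S} (f : A ⟶ B) (g : B ⟶ D) (h : D ⟶ E),
      (f ≫ g) ≫ h = f ≫ g ≫ h)
    (e₁ : ∀ X : TOrbit C O S,
      compareMap (𝟙 X) = 𝟙 (⟨X.un, 0⟩ : ZOrbit C O S))
    (e₂ : ∀ {X Y Z : TOrbit C O S} (f : X ⟶ Y) (g : Y ⟶ Z),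
      compareMap (f ≫ g) = zoComp (compareMap f) (compareMap g)) : Prop :=
  letI catC : Category (TOrbit C O S) := torbitCategory C O S @h₁ @h₂ @h₃
  letI catZ : Category (ZOrbit C O S) := zoCategory C O S @l₁ @l₂ @l₃
  letI E : TOrbit C O S ⥤ ZOrbit C O S :=
    { obj := fun X => ⟨X.un, 0⟩, map := fun φ => compareMap φ,
      map_id := e₁, map_comp := fun f g => e₂ f g }
  -- the comparison functor is an equivalence of categories:
  E.Full ∧ E.Faithful ∧ E.EssSurj ∧ E.IsEquivalence ∧
  -- essential surjectivity comes from `(X, m) ≅ (X, 0)` in `C_ℤ/T` for every `m`: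
  (∀ (X : C) (m : ℤ), Nonempty ((⟨X, m⟩ : ZOrbit C O S) ≅ (⟨X, 0⟩ : ZOrbit C O S)))

end OrbitComparisonFormalization

/-!
All three composition laws are the homogeneous composite
`hcomp f g = f ≫ g ▷ O^r ≫ α ≫ Z ◁ μ` followed by a reindexing `eqToHom` of the power of `O`,
so the category axioms of `C/_{-⊗O}`, `C_ℤ` and `C_ℤ/T`, and the functoriality of `T` and of
the comparison functor, reduce to unitality and associativity of `hcomp`, which are the unit
and associativity coherences of the power system. On morphisms the comparison functor only
reindexes the summands `Hom_C(X, Y ⊗ O^{⊗j}) = Hom_C(X, Y ⊗ O^{⊗(0+j-0)})`, so it is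
bijective; and the identity of `X`, placed in orbit degree `m - n`, is an isomorphism
`(X, m) ≅ (X, n)` in `C_ℤ/T`.
-/

theorem CategoryTheory.eq_comp_whiskerLeft_eqToHom_iff {C : Type u} [Category.{v} C]
    [MonoidalCategory C] {X Z A B : C} (f : X ⟶ Z ⊗ B) (g : X ⟶ Z ⊗ A) (h : A = B) :
    f = g ≫ Z ◁ eqToHom h ↔ f ≫ Z ◁ eqToHom h.symm = g := by
  subst h
  simp

theorem DirectSum.of_eq_of_comp_eqToHom {C : Type u} [Category.{v} C] [Preadditive C]
    {ι : Type*} [DecidableEq ι] {X : C} {Q : ι → C} {i j : ι} (h : i = j) (x : X ⟶ Q i) :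
    DirectSum.of (fun k => X ⟶ Q k) i x =
      DirectSum.of (fun k => X ⟶ Q k) j (x ≫ eqToHom (congrArg Q h)) := by
  subst h
  simp

namespace OrbitComparisonFormalization

section Homogeneous

variable {C : Type u} [Category.{v} C] [MonoidalCategory C] {O : C} {S : PowerSystem C O}

theorem PowerSystem.μ_add_zero_eqToHom (i : ℤ) :
    (S.μ i 0).hom ≫ eqToHom (congrArg S.P (add_zero i)) = S.P i ◁ S.u0.hom ≫ (ρ_ _).hom := by
  simp [S.μ_add_zero]

theorem PowerSystem.μ_zero_add_eqToHom (j : ℤ) :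
    (S.μ 0 j).hom ≫ eqToHom (congrArg S.P (zero_add j)) = S.u0.hom ▷ S.P j ≫ (λ_ _).hom := by
  simp [S.μ_zero_add]

def hcomp {X Y Z : C} {r s : ℤ} (f : X ⟶ Y ⊗ S.P r) (g : Y ⟶ Z ⊗ S.P s) :
    X ⟶ Z ⊗ S.P (s + r) :=
  f ≫ g ▷ S.P r ≫ (α_ Z (S.P s) (S.P r)).hom ≫ Z ◁ (S.μ s r).hom

theorem te₀_id_hcomp {X Z : C} {s : ℤ} (f : X ⟶ Z ⊗ S.P s) :
    hcomp (te₀ C O S (𝟙 X)) f = f ≫ Z ◁ eqToHom (congrArg S.P (add_zero s).symm) := by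
  rw [eq_comp_whiskerLeft_eqToHom_iff, hcomp]
  simp only [Category.assoc, ← MonoidalCategory.whiskerLeft_comp, S.μ_add_zero_eqToHom]
  simp [te₀, whisker_exchange_assoc]

theorem hcomp_te₀_id {X Y : C} {r : ℤ} (f : X ⟶ Y ⊗ S.P r) :
    hcomp f (te₀ C O S (𝟙 Y)) = f ≫ Y ◁ eqToHom (congrArg S.P (zero_add r).symm) := by
  rw [eq_comp_whiskerLeft_eqToHom_iff, hcomp]
  simp only [Category.assoc, ← MonoidalCategory.whiskerLeft_comp, S.μ_zero_add_eqToHom]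
  simp [te₀]

theorem hcomp_assoc {X Y Z W : C} {r s t : ℤ} (f : X ⟶ Y ⊗ S.P r) (g : Y ⟶ Z ⊗ S.P s)
    (h : Z ⟶ W ⊗ S.P t) :
    hcomp f (hcomp g h) =
      hcomp (hcomp f g) h ≫ W ◁ eqToHom (congrArg S.P (add_assoc t s r).symm) := by
  simp only [hcomp, MonoidalCategory.comp_whiskerRight, Category.assoc]
  rw [whisker_exchange_assoc, associator_naturality_right_assoc,
    ← associator_naturality_left_assoc, associator_naturality_middle_assoc,
    ← MonoidalCategory.whiskerLeft_comp, S.μ_assoc t s r]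
  simp only [MonoidalCategory.whiskerLeft_comp, pentagon_assoc]

theorem hcomp_eqToHom_left {X Y Z : C} {r r' s : ℤ} (h : r = r') (f : X ⟶ Y ⊗ S.P r)
    (g : Y ⟶ Z ⊗ S.P s) :
    hcomp (f ≫ Y ◁ eqToHom (congrArg S.P h)) g =
      hcomp f g ≫ Z ◁ eqToHom (congrArg S.P (congrArg (s + ·) h)) := by
  subst h
  simp

theorem hcomp_eqToHom_right {X Y Z : C} {r s s' : ℤ} (h : s = s') (f : X ⟶ Y ⊗ S.P r)
    (g : Y ⟶ Z ⊗ S.P s) :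
    hcomp f (g ≫ Z ◁ eqToHom (congrArg S.P h)) =
      hcomp f g ≫ Z ◁ eqToHom (congrArg S.P (congrArg (· + r) h)) := by
  subst h
  simp

end Homogeneous

section OrbitCategory

variable {C : Type u} [Category.{v} C] [Preadditive C] [MonoidalCategory C]
  [MonoidalPreadditive C] {O : C} {S : PowerSystem C O}

theorem torbit_comp_def {X Y Z : TOrbit C O S} (f : X ⟶ Y) (g : Y ⟶ Z) :
    f ≫ g = tocomp C O S f g := rfl

theorem torbit_id_def (X : TOrbit C O S) : 𝟙 X = DirectSum.of _ 0 (te₀ C O S (𝟙 X.un)) := rfl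

theorem tocomp_of_of {X Y Z : C} {r s : ℤ} (f : X ⟶ Y ⊗ S.P r) (g : Y ⟶ Z ⊗ S.P s) :
    tocomp C O S (DirectSum.of _ r f) (DirectSum.of _ s g) =
      DirectSum.of (fun k => X ⟶ Z ⊗ S.P k) (s + r) (hcomp f g) := by
  simp [tocomp, thcompHom, hcomp]

theorem torbit_id_comp {X Y : TOrbit C O S} (f : X ⟶ Y) : 𝟙 X ≫ f = f := by
  rw [torbit_comp_def, torbit_id_def]
  induction f using DirectSum.induction_on with
  | zero => simp
  | add f g hf hg => rw [map_add, hf, hg]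
  | of s f =>
    rw [tocomp_of_of, te₀_id_hcomp, DirectSum.of_eq_of_comp_eqToHom (add_zero s)]
    simp

theorem torbit_comp_id {X Y : TOrbit C O S} (f : X ⟶ Y) : f ≫ 𝟙 Y = f := by
  rw [torbit_comp_def, torbit_id_def]
  induction f using DirectSum.induction_on with
  | zero => simp
  | add f g hf hg => rw [map_add, AddMonoidHom.add_apply, hf, hg]
  | of r f =>
    rw [tocomp_of_of, hcomp_te₀_id, DirectSum.of_eq_of_comp_eqToHom (zero_add r)]
    simp

theorem torbit_assoc {W X Y Z : TOrbit C O S} (f : W ⟶ X) (g : X ⟶ Y) (h : Y ⟶ Z) :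
    (f ≫ g) ≫ h = f ≫ g ≫ h := by
  simp only [torbit_comp_def]
  induction f using DirectSum.induction_on with
  | zero => simp
  | add f f' hf hf' => simp only [map_add, AddMonoidHom.add_apply, hf, hf']
  | of r f =>
  induction g using DirectSum.induction_on with
  | zero => simp
  | add g g' hg hg' => simp only [map_add, AddMonoidHom.add_apply, hg, hg']
  | of s g =>
  induction h using DirectSum.induction_on with
  | zero => simp
  | add h h' hh hh' => simp only [map_add, hh, hh']
  | of t h =>
  rw [tocomp_of_of, tocomp_of_of, tocomp_of_of, tocomp_of_of, hcomp_assoc,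
    DirectSum.of_eq_of_comp_eqToHom (add_assoc t s r).symm]
  simp

/-- Reducible and only a local instance, so that `≫` on `TOrbit` still elaborates through
`torbitStruct`, as it does in `Statement6Body`. -/
@[reducible] def torbitCat : Category (TOrbit C O S) where
  id_comp := torbit_id_comp
  comp_id := torbit_comp_id
  assoc := torbit_assoc

end OrbitCategory

section IntegerLabels

variable {C : Type u} [Category.{v} C] [MonoidalCategory C] {O : C} {S : PowerSystem C O}

theorem cz_id_def (A : CZ C O S) :
    𝟙 A = te₀ C O S (𝟙 A.base) ≫ A.base ◁ eqToHom (congrArg S.P (sub_self A.deg).symm) := rfl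

theorem cz_comp_eq_hcomp {A B D : CZ C O S} (f : A ⟶ B) (g : B ⟶ D) :
    f ≫ g =
      hcomp f g ≫ D.base ◁ eqToHom (congrArg S.P (sub_add_sub_cancel D.deg B.deg A.deg)) := by
  simp [CategoryStruct.comp, czComp, hcomp]

theorem cz_id_comp {A B : CZ C O S} (f : A ⟶ B) : 𝟙 A ≫ f = f := by
  rw [cz_comp_eq_hcomp, cz_id_def, hcomp_eqToHom_left (by omega), te₀_id_hcomp]
  simp

theorem cz_comp_id {A B : CZ C O S} (f : A ⟶ B) : f ≫ 𝟙 B = f := by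
  rw [cz_comp_eq_hcomp, cz_id_def, hcomp_eqToHom_right (by omega), hcomp_te₀_id]
  simp

theorem cz_assoc {A B D E : CZ C O S} (f : A ⟶ B) (g : B ⟶ D) (h : D ⟶ E) :
    (f ≫ g) ≫ h = f ≫ g ≫ h := by
  rw [cz_comp_eq_hcomp f g, cz_comp_eq_hcomp g h, cz_comp_eq_hcomp, cz_comp_eq_hcomp,
    hcomp_eqToHom_left (by omega), hcomp_eqToHom_right (by omega), hcomp_assoc]
  simp

theorem czTmap_id (A : CZ C O S) :
    czTmap C O S (𝟙 A) = 𝟙 (⟨A.base, A.deg + 1⟩ : CZ C O S) := by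
  simp [czTmap, cz_id_def]

theorem czTmap_comp {A B D : CZ C O S} (f : A ⟶ B) (g : B ⟶ D) :
    czTmap C O S (f ≫ g) = czTmap C O S f ≫ czTmap C O S g := by
  rw [czTmap, czTmap, czTmap, cz_comp_eq_hcomp, cz_comp_eq_hcomp,
    hcomp_eqToHom_left (by dsimp only; omega), hcomp_eqToHom_right (by dsimp only; omega)]
  simp

end IntegerLabels

section OrbitOfIntegerLabels

variable {C : Type u} [Category.{v} C] [Preadditive C] [MonoidalCategory C]
  [MonoidalPreadditive C] {O : C} {S : PowerSystem C O}

theorem zorbit_comp_def {A B D : ZOrbit C O S} (f : A ⟶ B) (g : B ⟶ D) :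
    f ≫ g = zoComp f g := rfl

theorem zorbit_id_def (A : ZOrbit C O S) :
    𝟙 A = DirectSum.of (fun j => A.base ⟶ A.base ⊗ S.P (A.deg + j - A.deg)) 0
      (te₀ C O S (𝟙 A.base) ≫
        A.base ◁ eqToHom (congrArg S.P (by omega : (0 : ℤ) = A.deg + 0 - A.deg))) := rfl

theorem zoComp_of_of {A B D : ZOrbit C O S} {r s : ℤ}
    (f : A.base ⟶ B.base ⊗ S.P (B.deg + r - A.deg))
    (g : B.base ⟶ D.base ⊗ S.P (D.deg + s - B.deg)) :
    zoComp (DirectSum.of _ r f) (DirectSum.of _ s g) =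
      DirectSum.of (fun j => A.base ⟶ D.base ⊗ S.P (D.deg + j - A.deg)) (r + s)
        (hcomp f g ≫ D.base ◁ eqToHom (congrArg S.P (by omega :
          D.deg + s - B.deg + (B.deg + r - A.deg) = D.deg + (r + s) - A.deg))) := by
  simp [zoComp, zoCompHom, hcomp]

theorem zorbit_id_comp {A B : ZOrbit C O S} (f : A ⟶ B) : 𝟙 A ≫ f = f := by
  rw [zorbit_comp_def, zorbit_id_def]
  induction f using DirectSum.induction_on with
  | zero => simp
  | add f g hf hg => rw [map_add, hf, hg]
  | of s f =>
    rw [zoComp_of_of, hcomp_eqToHom_left (by omega), te₀_id_hcomp,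
      DirectSum.of_eq_of_comp_eqToHom (zero_add s)]
    simp

theorem zorbit_comp_id {A B : ZOrbit C O S} (f : A ⟶ B) : f ≫ 𝟙 B = f := by
  rw [zorbit_comp_def, zorbit_id_def]
  induction f using DirectSum.induction_on with
  | zero => simp
  | add f g hf hg => rw [map_add, AddMonoidHom.add_apply, hf, hg]
  | of r f =>
    rw [zoComp_of_of, hcomp_eqToHom_right (by omega), hcomp_te₀_id,
      DirectSum.of_eq_of_comp_eqToHom (add_zero r)]
    simp

theorem zorbit_assoc {A B D E : ZOrbit C O S} (f : A ⟶ B) (g : B ⟶ D) (h : D ⟶ E) :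
    (f ≫ g) ≫ h = f ≫ g ≫ h := by
  simp only [zorbit_comp_def]
  induction f using DirectSum.induction_on with
  | zero => simp
  | add f f' hf hf' => simp only [map_add, AddMonoidHom.add_apply, hf, hf']
  | of r f =>
  induction g using DirectSum.induction_on with
  | zero => simp
  | add g g' hg hg' => simp only [map_add, AddMonoidHom.add_apply, hg, hg']
  | of s g =>
  induction h using DirectSum.induction_on with
  | zero => simp
  | add h h' hh hh' => simp only [map_add, hh, hh']
  | of t h =>
  rw [zoComp_of_of, zoComp_of_of, zoComp_of_of, zoComp_of_of,
    hcomp_eqToHom_left (by omega), hcomp_eqToHom_right (by omega), hcomp_assoc,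
    DirectSum.of_eq_of_comp_eqToHom (add_assoc r s t)]
  simp

@[reducible] def zorbitCat : Category (ZOrbit C O S) where
  id_comp := zorbit_id_comp
  comp_id := zorbit_comp_id
  assoc := zorbit_assoc

attribute [local instance] zorbitCat

def ZOrbit.relabel (X : C) (m n : ℤ) : (⟨X, m⟩ : ZOrbit C O S) ⟶ ⟨X, n⟩ :=
  DirectSum.of (fun j => X ⟶ X ⊗ S.P (n + j - m)) (m - n)
    (te₀ C O S (𝟙 X) ≫ X ◁ eqToHom (congrArg S.P (by omega : (0 : ℤ) = n + (m - n) - m)))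

theorem ZOrbit.relabel_self (X : C) (m : ℤ) :
    ZOrbit.relabel (S := S) X m m = 𝟙 (⟨X, m⟩ : ZOrbit C O S) := by
  rw [ZOrbit.relabel, zorbit_id_def, DirectSum.of_eq_of_comp_eqToHom (sub_self m)]
  simp

theorem ZOrbit.relabel_comp_relabel (X : C) (m n p : ℤ) :
    ZOrbit.relabel (S := S) X m n ≫ ZOrbit.relabel X n p = ZOrbit.relabel X m p := by
  rw [zorbit_comp_def, ZOrbit.relabel, ZOrbit.relabel, zoComp_of_of,
    hcomp_eqToHom_left (by dsimp only; omega), hcomp_eqToHom_right (by dsimp only; omega),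
    te₀_id_hcomp, ZOrbit.relabel, DirectSum.of_eq_of_comp_eqToHom (sub_add_sub_cancel m n p)]
  simp

def ZOrbit.relabelIso (X : C) (m n : ℤ) : (⟨X, m⟩ : ZOrbit C O S) ≅ ⟨X, n⟩ where
  hom := ZOrbit.relabel X m n
  inv := ZOrbit.relabel X n m
  hom_inv_id := by rw [ZOrbit.relabel_comp_relabel, ZOrbit.relabel_self]
  inv_hom_id := by rw [ZOrbit.relabel_comp_relabel, ZOrbit.relabel_self]

end OrbitOfIntegerLabels

section Comparison

variable {C : Type u} [Category.{v} C] [Preadditive C] [MonoidalCategory C]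
  [MonoidalPreadditive C] {O : C} {S : PowerSystem C O}

attribute [local instance] torbitCat zorbitCat

def compareEquiv (X Y : TOrbit C O S) :
    (X ⟶ Y) ≃+ ZOHom C O S ⟨X.un, 0⟩ ⟨Y.un, 0⟩ :=
  DFinsupp.mapRange.addEquiv fun j => (Linear.homCongr ℤ (Iso.refl X.un)
    (whiskerLeftIso Y.un (eqToIso (congrArg S.P (by omega : j = 0 + j - 0))))).toAddEquiv

theorem compareMap_eq_compareEquiv {X Y : TOrbit C O S} (φ : X ⟶ Y) :
    compareMap φ = compareEquiv X Y φ := by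
  rw [compareMap]
  refine DFunLike.congr_fun
    (DirectSum.addHom_ext (g := (compareEquiv X Y).toAddMonoidHom) fun j f => ?_) φ
  rw [DirectSum.toAddMonoid_of, AddMonoidHom.mk'_apply, AddEquiv.coe_toAddMonoidHom,
    compareEquiv, DFinsupp.mapRange.addEquiv_apply]
  change DFinsupp.single j _ =
    DFinsupp.mapRange _ _ (DFinsupp.single (β := fun k => X.un ⟶ Y.un ⊗ S.P k) j f)
  simp [DFinsupp.mapRange_single, Linear.homCongr_apply]

theorem compareMap_of {X Y : TOrbit C O S} {j : ℤ} (f : X.un ⟶ Y.un ⊗ S.P j) :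
    compareMap (DirectSum.of (fun k => X.un ⟶ Y.un ⊗ S.P k) j f) =
      DirectSum.of (fun k => X.un ⟶ Y.un ⊗ S.P (0 + k - 0)) j
        (f ≫ Y.un ◁ eqToHom (congrArg S.P (by omega : j = 0 + j - 0))) := by
  simp [compareMap]

theorem compareMap_add {X Y : TOrbit C O S} (f g : THom C O S X.un Y.un) :
    compareMap (X := X) (Y := Y) (f + g) = compareMap f + compareMap g := by
  simp only [compareMap_eq_compareEquiv, map_add]

theorem compareMap_id (X : TOrbit C O S) :
    compareMap (𝟙 X) = 𝟙 (⟨X.un, 0⟩ : ZOrbit C O S) := by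
  rw [torbit_id_def, compareMap_of, zorbit_id_def]

theorem compareMap_comp {X Y Z : TOrbit C O S} (f : X ⟶ Y) (g : Y ⟶ Z) :
    compareMap (f ≫ g) = zoComp (compareMap f) (compareMap g) := by
  rw [torbit_comp_def]
  induction f using DirectSum.induction_on with
  | zero => simp [compareMap_eq_compareEquiv]
  | add f f' hf hf' => simp only [map_add, AddMonoidHom.add_apply, compareMap_add, hf, hf']
  | of r f =>
  induction g using DirectSum.induction_on with
  | zero => simp [compareMap_eq_compareEquiv]
  | add g g' hg hg' => simp only [map_add, compareMap_add, hg, hg']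
  | of s g =>
  rw [tocomp_of_of, compareMap_of, compareMap_of, compareMap_of, zoComp_of_of,
    hcomp_eqToHom_left (by dsimp only; omega), hcomp_eqToHom_right (by dsimp only; omega),
    DirectSum.of_eq_of_comp_eqToHom (add_comm s r)]
  simp

def compareFunctor : TOrbit C O S ⥤ ZOrbit C O S where
  obj X := ⟨X.un, 0⟩
  map φ := compareMap φ
  map_id := compareMap_id
  map_comp := compareMap_comp

instance compareFunctor_full : (compareFunctor (S := S)).Full :=
  ⟨fun ψ => ⟨(compareEquiv _ _).symm ψ,
    (compareMap_eq_compareEquiv _).trans ((compareEquiv _ _).apply_symm_apply ψ)⟩⟩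

instance compareFunctor_faithful : (compareFunctor (S := S)).Faithful :=
  ⟨fun {_ _ f g} h => (compareEquiv _ _).injective <|
    (compareMap_eq_compareEquiv f).symm.trans (h.trans (compareMap_eq_compareEquiv g))⟩

instance compareFunctor_essSurj : (compareFunctor (S := S)).EssSurj :=
  ⟨fun A => ⟨⟨A.base⟩, ⟨ZOrbit.relabelIso A.base 0 A.deg⟩⟩⟩

instance compareFunctor_isEquivalence : (compareFunctor (S := S)).IsEquivalence where

end Comparison

variable (C : Type u) [Category.{v} C] [Preadditive C] [MonoidalCategory C]
  [SymmetricCategory C] [MonoidalPreadditive C]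

variable (O : C) (S : PowerSystem C O)

/-- Let `C` be an additive category carrying a symmetric monoidal
structure with bi-additive tensor product, and `O` a ⊗-invertible object (with chosen
tensor powers).  Let `C_ℤ` denote the category of pairs `(X, m)`, `m ∈ ℤ`, with
`Hom((X,m),(Y,n)) = Hom_C(X, Y ⊗ O^{⊗(n−m)})` and the canonical composition, and let
`T : C_ℤ → C_ℤ` be the automorphism `(X, m) ↦ (X, m+1)` acting by the canonical
identifications on morphisms.  Then the functor from the orbit category `C/_{-⊗O}`
to the orbit category `C_ℤ/T` which sends an object `X` to `(X, 0)` and acts by the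
canonical identifications on morphisms is an equivalence of categories (it is fully
faithful, and essentially surjective because `(X, m) ≅ (X, 0)` in `C_ℤ/T`). -/
theorem statement6 :
    -- the category axioms for `C/_{-⊗O}`, `C_ℤ`, `C_ℤ/T`, the functoriality of the
    -- automorphism `T` and of the comparison functor (well-definedness) ...
    ∃ (h₁ : ∀ {X Y : TOrbit C O S} (f : X ⟶ Y), 𝟙 X ≫ f = f)
      (h₂ : ∀ {X Y : TOrbit C O S} (f : X ⟶ Y), f ≫ 𝟙 Y = f)
      (h₃ : ∀ {W X Y Z : TOrbit C O S} (f : W ⟶ X) (g : X ⟶ Y) (h : Y ⟶ Z),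
        (f ≫ g) ≫ h = f ≫ g ≫ h)
      (k₁ : ∀ {A B : CZ C O S} (f : A ⟶ B), 𝟙 A ≫ f = f)
      (k₂ : ∀ {A B : CZ C O S} (f : A ⟶ B), f ≫ 𝟙 B = f)
      (k₃ : ∀ {A B D E : CZ C O S} (f : A ⟶ B) (g : B ⟶ D) (h : D ⟶ E),
        (f ≫ g) ≫ h = f ≫ g ≫ h)
      (t₁ : ∀ A : CZ C O S, czTmap C O S (𝟙 A) = 𝟙 (⟨A.base, A.deg + 1⟩ : CZ C O S))
      (t₂ : ∀ {A B D : CZ C O S} (f : A ⟶ B) (g : B ⟶ D),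
        czTmap C O S (f ≫ g) = czTmap C O S f ≫ czTmap C O S g)
      (l₁ : ∀ {A B : ZOrbit C O S} (f : A ⟶ B), 𝟙 A ≫ f = f)
      (l₂ : ∀ {A B : ZOrbit C O S} (f : A ⟶ B), f ≫ 𝟙 B = f)
      (l₃ : ∀ {A B D E : ZOrbit C O S} (f : A ⟶ B) (g : B ⟶ D) (h : D ⟶ E),
        (f ≫ g) ≫ h = f ≫ g ≫ h)
      (e₁ : ∀ X : TOrbit C O S,
        compareMap (𝟙 X) = 𝟙 (⟨X.un, 0⟩ : ZOrbit C O S))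
      (e₂ : ∀ {X Y Z : TOrbit C O S} (f : X ⟶ Y) (g : Y ⟶ Z),
        compareMap (f ≫ g) = zoComp (compareMap f) (compareMap g)),
      -- ... such that the comparison functor is an equivalence:
      Statement6Body C O S @h₁ @h₂ @h₃ @l₁ @l₂ @l₃ e₁ @e₂ :=
  ⟨torbit_id_comp, torbit_comp_id, torbit_assoc, cz_id_comp, cz_comp_id, cz_assoc, czTmap_id,
    czTmap_comp, zorbit_id_comp, zorbit_comp_id, zorbit_assoc, compareMap_id, compareMap_comp,
    compareFunctor_full, compareFunctor_faithful, compareFunctor_essSurj,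
    compareFunctor_isEquivalence,
    fun X m => ⟨ZOrbit.relabelIso X m 0⟩⟩

end OrbitComparisonFormalization
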